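/- arXiv:1111.1396 — 4 statements merged into one kernel-verified Lean document; each statement's English description precedes it below -/
import Mathlib

section
/- Let x ∈ ℝ^n be a k-sparse vector with support set K, let x̂ ∈ ℝ^n be an arbitrary vector, and let L be a k-support of x̂. Then |K ∩ L| ≥ k − W(x, ‖x − x̂‖₁). -/
open Finset

/-- The support of a vector `x : Fin n → ℝ` as a `Finset`. -/
noncomputable def spt {n : ℕ} (x : Fin n → ℝ) : Finset (Fin n) :=
  Finset.univ.filter (fun i => x i ≠ 0)

/-- `W x lam` is the size of the largest subset `S` of the support of `x`
with `‖x_S‖₁ ≤ lam`. -/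
noncomputable def W {n : ℕ} (x : Fin n → ℝ) (lam : ℝ) : ℕ :=
  ((spt x).powerset.filter (fun S => ∑ i ∈ S, |x i| ≤ lam)).sup Finset.card

/-!
The indices of `K \ L` are exchanged for the equally many indices of `L \ K`, where `x`
vanishes. Since `L` collects the largest entries of `x̂`, `‖x̂_{K \ L}‖₁ ≤ ‖x̂_{L \ K}‖₁
= ‖(x - x̂)_{L \ K}‖₁`, so by the triangle inequality on `K \ L`,
`‖x_{K \ L}‖₁ ≤ ‖x - x̂‖₁`. Hence `|K \ L| ≤ W(x, ‖x - x̂‖₁)`, and `|K ∩ L| = k - |K \ L|`.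
-/

section Exchange

variable {ι M : Type*} [AddCommMonoid M] [LinearOrder M] [IsOrderedAddMonoid M]

theorem Finset.sum_le_sum_of_card_eq_of_forall_le {s t : Finset ι} {f : ι → M}
    (hcard : s.card = t.card) (hle : ∀ i ∈ s, ∀ j ∈ t, f i ≤ f j) :
    ∑ i ∈ s, f i ≤ ∑ j ∈ t, f j := by
  rcases t.eq_empty_or_nonempty with rfl | ht
  · rw [card_eq_zero.mp (hcard.trans card_empty)]
  calc ∑ i ∈ s, f i ≤ s.card • t.inf' ht f :=
        sum_le_card_nsmul _ _ _ fun i hi => le_inf' ht f fun j hj => hle i hi j hj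
    _ = t.card • t.inf' ht f := by rw [hcard]
    _ ≤ ∑ j ∈ t, f j := card_nsmul_le_sum _ _ _ fun j hj => inf'_le f hj

theorem Finset.sum_sdiff_le_sum_sdiff_of_forall_le [DecidableEq ι] {K L : Finset ι}
    {f : ι → M} (hcard : K.card = L.card) (hL : ∀ i ∈ L, ∀ j ∉ L, f j ≤ f i) :
    ∑ i ∈ K \ L, f i ≤ ∑ j ∈ L \ K, f j :=
  sum_le_sum_of_card_eq_of_forall_le (card_sdiff_comm hcard)
    fun i hi j hj => hL j (mem_sdiff.mp hj).1 i (mem_sdiff.mp hi).2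

end Exchange

theorem card_le_W {n : ℕ} {x : Fin n → ℝ} {lam : ℝ} {S : Finset (Fin n)}
    (hS : S ⊆ spt x) (hsum : ∑ i ∈ S, |x i| ≤ lam) : S.card ≤ W x lam :=
  le_sup (mem_filter.mpr ⟨mem_powerset.mpr hS, hsum⟩)

theorem sum_abs_spt_sdiff_le {n : ℕ} (x xhat : Fin n → ℝ) {L : Finset (Fin n)}
    (hcard : (spt x).card = L.card) (hL : ∀ i ∈ L, ∀ j ∉ L, |xhat j| ≤ |xhat i|) :
    ∑ i ∈ spt x \ L, |x i| ≤ ∑ i, |x i - xhat i| := by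
  set K := spt x
  have hx_off : ∀ j ∈ L \ K, |xhat j| = |x j - xhat j| := fun j hj => by
    have hxj : x j = 0 := by simpa [K, spt] using (mem_sdiff.mp hj).2
    rw [hxj, zero_sub, abs_neg]
  have hdisj : Disjoint (K \ L) (L \ K) := disjoint_sdiff_sdiff
  calc ∑ i ∈ K \ L, |x i|
      ≤ ∑ i ∈ K \ L, (|x i - xhat i| + |xhat i|) :=
        sum_le_sum fun i _ => by simpa using abs_add_le (x i - xhat i) (xhat i)
    _ = ∑ i ∈ K \ L, |x i - xhat i| + ∑ i ∈ K \ L, |xhat i| := sum_add_distrib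
    _ ≤ ∑ i ∈ K \ L, |x i - xhat i| + ∑ j ∈ L \ K, |xhat j| := by
        gcongr 1; exact sum_sdiff_le_sum_sdiff_of_forall_le hcard hL
    _ = ∑ i ∈ K \ L ∪ L \ K, |x i - xhat i| := by
        rw [sum_union hdisj, sum_congr rfl hx_off]
    _ ≤ ∑ i, |x i - xhat i| :=
        sum_le_sum_of_subset_of_nonneg (subset_univ _) fun _ _ _ => abs_nonneg _

/-- If `x` is `k`-sparse with support `K` and `L` is a `k`-support of `x̂`, then
`|K ∩ L| ≥ k − W(x, ‖x − x̂‖₁)`. -/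
theorem stmt0 {n k : ℕ} (x xhat : Fin n → ℝ) (K L : Finset (Fin n))
    (hK : K = spt x) (hk : K.card = k)
    (hLcard : L.card = k)
    (hLsupp : ∀ i ∈ L, ∀ j ∉ L, |xhat j| ≤ |xhat i|) :
    (k : ℤ) - (W x (∑ i, |x i - xhat i|) : ℤ) ≤ ((K ∩ L).card : ℤ) := by
  subst hK
  have hW : (spt x \ L).card ≤ W x (∑ i, |x i - xhat i|) :=
    card_le_W sdiff_subset (sum_abs_spt_sdiff_le x xhat (hk.trans hLcard.symm) hLsupp)
  have hsplit := card_inter_add_card_sdiff (spt x) L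
  omega
end

section
/- Let A be a real m×n matrix, S ⊆ {1,…,n}, C > 1, κ ≥ 0, and x, x̂ ∈ ℝ^n. Assume: (i) A x̂ = A x; (ii) ‖x̂‖₁ ≤ ‖x‖₁; (iii) ‖x_S‖₁ − ‖x̂_S‖₁ ≤ (2/(C−1)) ‖x_{S̄}‖₁; and (iv) every w ∈ ℝ^n with A w = 0 satisfies ‖w_S‖₁ ≤ κ ‖w_{S̄}‖₁. Then ‖x − x̂‖₁ ≤ (2C(1+κ)/(C−1)) ‖x_{S̄}‖₁. -/
/-!
The error `w = x - x̂` lies in the kernel of `A`, so the null space property bounds `‖w‖₁` by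
`(1 + κ) ‖w_{S̄}‖₁`. Off `S`, the triangle inequality and `‖x̂‖₁ ≤ ‖x‖₁` give
`‖w_{S̄}‖₁ ≤ 2 ‖x_{S̄}‖₁ + (‖x_S‖₁ - ‖x̂_S‖₁)`, and (iii) turns the right-hand side into
`(2 + 2/(C-1)) ‖x_{S̄}‖₁ = (2C/(C-1)) ‖x_{S̄}‖₁`.
-/

open Finset

variable {ι : Type*} [Fintype ι] [DecidableEq ι]

theorem sum_compl_abs_sub_le_of_sum_abs_le (S : Finset ι) {x y : ι → ℝ}
    (hxy : ∑ i, |y i| ≤ ∑ i, |x i|) :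
    ∑ i ∈ Sᶜ, |x i - y i| ≤
      2 * ∑ i ∈ Sᶜ, |x i| + (∑ i ∈ S, |x i| - ∑ i ∈ S, |y i|) := by
  have htri : ∑ i ∈ Sᶜ, |x i - y i| ≤ ∑ i ∈ Sᶜ, |x i| + ∑ i ∈ Sᶜ, |y i| := by
    rw [← sum_add_distrib]
    exact sum_le_sum fun i _ => abs_sub (x i) (y i)
  rw [← sum_add_sum_compl S, ← sum_add_sum_compl S fun i => |x i|] at hxy
  linarith

theorem sum_abs_le_of_sum_abs_le_mul_compl (S : Finset ι) {κ : ℝ} {w : ι → ℝ}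
    (hw : ∑ i ∈ S, |w i| ≤ κ * ∑ i ∈ Sᶜ, |w i|) :
    ∑ i, |w i| ≤ (1 + κ) * ∑ i ∈ Sᶜ, |w i| := by
  rw [← sum_add_sum_compl S]
  linarith

/-- Weak robustness implies the bound `‖x − x̂‖₁ ≤ (2C(1+κ)/(C−1)) ‖x_{S̄}‖₁`. -/
theorem stmt2 {m n : ℕ} (A : Matrix (Fin m) (Fin n) ℝ) (S : Finset (Fin n))
    (C κ : ℝ) (hC : 1 < C) (hκ : 0 ≤ κ) (x xhat : Fin n → ℝ)
    (h1 : A.mulVec xhat = A.mulVec x)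
    (h2 : ∑ i, |xhat i| ≤ ∑ i, |x i|)
    (h3 : ∑ i ∈ S, |x i| - ∑ i ∈ S, |xhat i| ≤ (2 / (C - 1)) * ∑ i ∈ Sᶜ, |x i|)
    (h4 : ∀ w : Fin n → ℝ, A.mulVec w = 0 →
      ∑ i ∈ S, |w i| ≤ κ * ∑ i ∈ Sᶜ, |w i|) :
    ∑ i, |x i - xhat i| ≤ (2 * C * (1 + κ) / (C - 1)) * ∑ i ∈ Sᶜ, |x i| := by
  have hker : A.mulVec (x - xhat) = 0 := by rw [Matrix.mulVec_sub, h1, sub_self]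
  have htail : ∑ i ∈ Sᶜ, |x i - xhat i| ≤ 2 * C / (C - 1) * ∑ i ∈ Sᶜ, |x i| := by
    have hconst : 2 * C / (C - 1) = 2 + 2 / (C - 1) := by
      field_simp [(sub_pos.2 hC).ne']
      ring
    rw [hconst, add_mul]
    linarith [sum_compl_abs_sub_le_of_sum_abs_le S h2]
  calc ∑ i, |x i - xhat i| ≤ (1 + κ) * ∑ i ∈ Sᶜ, |x i - xhat i| :=
        sum_abs_le_of_sum_abs_le_mul_compl S (h4 _ hker)
    _ ≤ (1 + κ) * (2 * C / (C - 1) * ∑ i ∈ Sᶜ, |x i|) := by gcongr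
    _ = (2 * C * (1 + κ) / (C - 1)) * ∑ i ∈ Sᶜ, |x i| := by ring
end

section
/- Let X_1, X_2, …, X_N be i.i.d. standard normal N(0,1) random variables, let S_N = ∑_{i=1}^N |X_i|, and for 1 ≤ M < N let S_M be the sum of the M largest values among |X_1|,…,|X_N|. Fix γ ∈ (0,1) and set M = ⌊γN⌋. Then for every sufficiently small ε > 0, as N → ∞: P(|S_N/N − √(2/π)| > ε) → 0, and P(|S_M/S_N − exp(−Ψ(γ/2)²/2)| > ε) → 0. -/
/-!
By the strong law of large numbers, `S_N / N → E|X| = √(2/π)` almost surely, and it suffices to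
show `S_M / N → √(2/π) e^{-a²/2}` almost surely. From above: `S_M ≤ M a + ∑ (|X_i| - a)⁺`, and
`E (|X| - a)⁺ = √(2/π) e^{-a²/2} - 2 a Q(a)` with `2 Q(a) = γ = lim M / N`. From below: for `t > a`
the indices with `|X_i| > t` have density `2 Q(t) < γ`, so eventually they all fit among the top `M`
and `S_M / N ≥ E[|X|; |X| > t] = √(2/π) e^{-t²/2}` in the limit; then let `t ↓ a`. Almost sure
convergence implies convergence in probability.
-/

open Finset MeasureTheory ProbabilityTheory Filter

/-- The standard Gaussian upper tail function `Q`. -/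
noncomputable def gaussQ (x : ℝ) : ℝ :=
  (Real.sqrt (2 * Real.pi))⁻¹ * ∫ y in Set.Ioi x, Real.exp (-(y ^ 2) / 2)

/-- `topSum N M y` is the sum of the `M` largest values among `y 0, …, y (N-1)`
(for nonnegative `y`, realized as the maximum of `∑_{i ∈ T} y i` over `M`-subsets
`T` of `{0, …, N-1}`). -/
noncomputable def topSum (N M : ℕ) (y : ℕ → ℝ) : ℝ :=
  if h : ((Finset.range N).powersetCard M).Nonempty then
    ((Finset.range N).powersetCard M).sup' h (fun T => ∑ i ∈ T, y i)
  else 0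

open Real Topology

lemma gaussianPDFReal_zero_one (x : ℝ) :
    gaussianPDFReal 0 1 x = (√(2 * π))⁻¹ * exp (-x ^ 2 / 2) := by
  simp [gaussianPDFReal]

lemma gaussQ_eq_setIntegral (t : ℝ) : gaussQ t = ∫ x in Set.Ioi t, gaussianPDFReal 0 1 x := by
  simp only [gaussianPDFReal_zero_one, integral_const_mul, gaussQ]

lemma gaussQ_nonneg (t : ℝ) : 0 ≤ gaussQ t := by
  rw [gaussQ_eq_setIntegral]
  exact setIntegral_nonneg measurableSet_Ioi fun x _ => gaussianPDFReal_nonneg 0 1 x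

lemma gaussQ_strictAnti : StrictAnti gaussQ := by
  intro s t hst
  have hint : Integrable (gaussianPDFReal 0 1) := integrable_gaussianPDFReal 0 1
  have hsplit : gaussQ s = (∫ x in Set.Ioc s t, gaussianPDFReal 0 1 x) + gaussQ t := by
    rw [gaussQ_eq_setIntegral, gaussQ_eq_setIntegral, ← Set.Ioc_union_Ioi_eq_Ioi hst.le,
      setIntegral_union (Set.Ioc_disjoint_Ioi le_rfl) measurableSet_Ioi hint.integrableOn
        hint.integrableOn]
  have hpos : 0 < ∫ x in Set.Ioc s t, gaussianPDFReal 0 1 x := by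
    rw [← intervalIntegral.integral_of_le hst.le]
    exact intervalIntegral.intervalIntegral_pos_of_pos_on hint.intervalIntegrable
      (fun x _ => gaussianPDFReal_pos 0 1 x one_ne_zero) hst
  linarith

lemma gaussQ_zero : gaussQ 0 = 1 / 2 := by
  have h := integral_gaussian_Ioi (1 / 2)
  rw [show π / (1 / 2) = 2 * π by ring] at h
  have hI : ∫ y in Set.Ioi (0 : ℝ), exp (-y ^ 2 / 2) = √(2 * π) / 2 := by
    rw [← h]
    congr 1 with y
    ring_nf
  have hpos : 0 < √(2 * π) := by positivity
  rw [gaussQ, hI]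
  field_simp

lemma gaussQ_le_half {t : ℝ} (ht : 0 ≤ t) : gaussQ t ≤ 1 / 2 :=
  gaussQ_zero ▸ gaussQ_strictAnti.antitone ht

lemma integral_Ioi_mul_exp_neg_sq_div_two (t : ℝ) :
    ∫ x in Set.Ioi t, x * exp (-x ^ 2 / 2) = exp (-t ^ 2 / 2) := by
  have hderiv (x : ℝ) : HasDerivAt (fun y => -exp (-y ^ 2 / 2)) (x * exp (-x ^ 2 / 2)) x := by
    have h : HasDerivAt (fun y : ℝ => -y ^ 2 / 2) (-x) x :=
      ((hasDerivAt_pow 2 x).fun_neg.div_const 2).congr_deriv (by push_cast; ring)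
    exact h.exp.fun_neg.congr_deriv (by ring)
  have hlim : Tendsto (fun y => -exp (-y ^ 2 / 2)) atTop (𝓝 (-0)) := by
    refine (tendsto_exp_atBot.comp ?_).neg
    exact (tendsto_neg_atTop_atBot.comp (tendsto_pow_atTop two_ne_zero)).atBot_div_const two_pos
  have hint : Integrable fun x : ℝ => x * exp (-x ^ 2 / 2) := by
    simpa [neg_div, div_eq_inv_mul] using
      integrable_mul_exp_neg_mul_sq (b := (1 / 2 : ℝ)) one_half_pos
  simpa using integral_Ioi_of_hasDerivAt_of_tendsto' (fun x _ => hderiv x) hint.integrableOn hlim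

lemma two_mul_inv_sqrt_two_mul_pi : 2 * (√(2 * π))⁻¹ = √(2 / π) := by
  rw [Real.sqrt_div' _ pi_pos.le, Real.sqrt_mul' _ pi_pos.le]
  have h2 : (0 : ℝ) < √2 := by positivity
  have hpi : 0 < √π := by positivity
  field_simp
  rw [Real.sq_sqrt zero_le_two]

lemma integral_gaussianReal_indicator_Ioi_abs {t : ℝ} (ht : 0 ≤ t) (f : ℝ → ℝ) :
    ∫ x, (Set.Ioi t).indicator f |x| ∂gaussianReal 0 1
      = 2 * ∫ x in Set.Ioi t, f x * gaussianPDFReal 0 1 x := by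
  calc ∫ x, (Set.Ioi t).indicator f |x| ∂gaussianReal 0 1
      = ∫ x, (Set.Ioi t).indicator (fun u => f u * gaussianPDFReal 0 1 u) |x| := by
        rw [integral_gaussianReal_eq_integral_smul one_ne_zero]
        congr 1 with x
        simp only [Set.indicator_apply, smul_eq_mul, gaussianPDFReal_zero_one, sq_abs]
        split_ifs <;> ring
    _ = 2 * ∫ x in Set.Ioi t, f x * gaussianPDFReal 0 1 x := by
        rw [integral_comp_abs, setIntegral_indicator measurableSet_Ioi, Set.Ioi_inter_Ioi,
          max_eq_right ht]

lemma integral_gaussianReal_indicator_Ioi_abs_one {t : ℝ} (ht : 0 ≤ t) :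
    ∫ x, (Set.Ioi t).indicator 1 |x| ∂gaussianReal 0 1 = 2 * gaussQ t := by
  simp [integral_gaussianReal_indicator_Ioi_abs ht, gaussQ_eq_setIntegral]

lemma integral_gaussianReal_indicator_Ioi_abs_id {t : ℝ} (ht : 0 ≤ t) :
    ∫ x, (Set.Ioi t).indicator id |x| ∂gaussianReal 0 1 = √(2 / π) * exp (-t ^ 2 / 2) := by
  have h (x : ℝ) : id x * gaussianPDFReal 0 1 x = (√(2 * π))⁻¹ * (x * exp (-x ^ 2 / 2)) := by
    rw [gaussianPDFReal_zero_one, id]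
    ring
  rw [integral_gaussianReal_indicator_Ioi_abs ht]
  simp_rw [h]
  rw [integral_const_mul, integral_Ioi_mul_exp_neg_sq_div_two, ← mul_assoc,
    two_mul_inv_sqrt_two_mul_pi]

lemma integral_gaussianReal_abs : ∫ x, |x| ∂gaussianReal 0 1 = √(2 / π) := by
  have h (x : ℝ) : (Set.Ioi 0).indicator id |x| = |x| := by
    by_cases hx : x = 0 <;> simp [hx]
  simpa [h] using integral_gaussianReal_indicator_Ioi_abs_id le_rfl

lemma max_sub_zero_eq_indicator (t u : ℝ) :
    max (u - t) 0 = (Set.Ioi t).indicator id u - t * (Set.Ioi t).indicator 1 u := by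
  by_cases hu : t < u
  · simp [Set.indicator_of_mem, hu, hu.le]
  · simp [Set.indicator_of_notMem, hu, not_lt.1 hu]

lemma integrable_gaussianReal_abs : Integrable (fun x => |x|) (gaussianReal 0 1) :=
  ((memLp_id_gaussianReal 1).integrable le_rfl).abs

lemma integrable_gaussianReal_indicator_Ioi_abs_one (t : ℝ) :
    Integrable (fun x => (Set.Ioi t).indicator (1 : ℝ → ℝ) |x|) (gaussianReal 0 1) := by
  refine .of_bound ((measurable_one.indicator measurableSet_Ioi).comp
    measurable_abs).aestronglyMeasurable 1 (ae_of_all _ fun x => ?_)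
  simpa using norm_indicator_le_norm_self (s := Set.Ioi t) (f := (1 : ℝ → ℝ)) (a := |x|)

lemma integrable_gaussianReal_indicator_Ioi_abs_id (t : ℝ) :
    Integrable (fun x => (Set.Ioi t).indicator id |x|) (gaussianReal 0 1) := by
  refine integrable_gaussianReal_abs.mono'
    ((measurable_id.indicator measurableSet_Ioi).comp measurable_abs).aestronglyMeasurable
    (ae_of_all _ fun x => ?_)
  simpa using norm_indicator_le_norm_self (s := Set.Ioi t) (f := id) (a := |x|)

lemma integrable_gaussianReal_max_abs_sub (t : ℝ) :
    Integrable (fun x => max (|x| - t) 0) (gaussianReal 0 1) := by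
  simp_rw [max_sub_zero_eq_indicator]
  exact (integrable_gaussianReal_indicator_Ioi_abs_id t).sub
    ((integrable_gaussianReal_indicator_Ioi_abs_one t).const_mul t)

lemma integral_gaussianReal_max_abs_sub {t : ℝ} (ht : 0 ≤ t) :
    ∫ x, max (|x| - t) 0 ∂gaussianReal 0 1 = √(2 / π) * exp (-t ^ 2 / 2) - 2 * t * gaussQ t := by
  simp_rw [max_sub_zero_eq_indicator]
  rw [integral_sub (integrable_gaussianReal_indicator_Ioi_abs_id t)
    ((integrable_gaussianReal_indicator_Ioi_abs_one t).const_mul t), integral_const_mul,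
    integral_gaussianReal_indicator_Ioi_abs_id ht, integral_gaussianReal_indicator_Ioi_abs_one ht]
  ring

lemma ae_tendsto_sum_range_comp_div {Ω E : Type*} [MeasurableSpace Ω] [MeasurableSpace E]
    {μ : Measure Ω} {X : ℕ → Ω → E} (hX : ∀ i, Measurable (X i))
    (hindep : Pairwise fun i j => IndepFun (X i) (X j) μ) {ν : Measure E}
    (hdist : ∀ i, μ.map (X i) = ν) {g : E → ℝ} (hg : Measurable g) (hint : Integrable g ν) :
    ∀ᵐ ω ∂μ, Tendsto (fun n : ℕ => (∑ i ∈ range n, g (X i ω)) / n) atTop (𝓝 (∫ x, g x ∂ν)) := by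
  have hmap (i : ℕ) : μ.map (g ∘ X i) = ν.map g := by
    rw [← hdist i, Measure.map_map hg (hX i)]
  have hident (i : ℕ) : IdentDistrib (g ∘ X i) (g ∘ X 0) μ μ :=
    ⟨(hg.comp (hX i)).aemeasurable, (hg.comp (hX 0)).aemeasurable, by rw [hmap, hmap]⟩
  have hint0 : Integrable (g ∘ X 0) μ := by
    rw [← hdist 0] at hint
    exact hint.comp_measurable (hX 0)
  have hmean : μ[g ∘ X 0] = ∫ x, g x ∂ν := by
    rw [← hdist 0, integral_map (hX 0).aemeasurable hg.aestronglyMeasurable]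
    rfl
  filter_upwards [strong_law_ae (g ∘ X ·) hint0 (fun i j hij => (hindep hij).comp hg hg) hident]
    with ω hω
  rw [← hmean]
  simpa [div_eq_inv_mul] using hω

lemma powersetCard_range_nonempty {N M : ℕ} (h : M ≤ N) : ((range N).powersetCard M).Nonempty :=
  powersetCard_nonempty.2 (by simpa using h)

lemma topSum_le_mul_add_sum_max_sub {N M : ℕ} (h : M ≤ N) (t : ℝ) (y : ℕ → ℝ) :
    topSum N M y ≤ M * t + ∑ i ∈ range N, max (y i - t) 0 := by
  rw [topSum, dif_pos (powersetCard_range_nonempty h), sup'_le_iff]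
  intro T hT
  obtain ⟨hTN, rfl⟩ := mem_powersetCard.1 hT
  calc ∑ i ∈ T, y i ≤ ∑ i ∈ T, (t + max (y i - t) 0) :=
        sum_le_sum fun i _ => by linarith [le_max_left (y i - t) 0]
    _ = #T * t + ∑ i ∈ T, max (y i - t) 0 := by
        rw [sum_add_distrib, sum_const, nsmul_eq_mul]
    _ ≤ #T * t + ∑ i ∈ range N, max (y i - t) 0 := by
        gcongr

lemma sum_le_topSum {N M : ℕ} (h : M ≤ N) {y : ℕ → ℝ} (hy : ∀ i, 0 ≤ y i) {T : Finset ℕ}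
    (hTN : T ⊆ range N) (hTM : #T ≤ M) : ∑ i ∈ T, y i ≤ topSum N M y := by
  obtain ⟨U, hTU, hUN, hUM⟩ := exists_subsuperset_card_eq hTN hTM (by simpa using h)
  rw [topSum, dif_pos (powersetCard_range_nonempty h)]
  calc ∑ i ∈ T, y i ≤ ∑ i ∈ U, y i := sum_le_sum_of_subset_of_nonneg hTU fun i _ _ => hy i
    _ ≤ _ := le_sup' (fun T => ∑ i ∈ T, y i) (mem_powersetCard.2 ⟨hUN, hUM⟩)

lemma measurable_topSum {Ω : Type*} [MeasurableSpace Ω] (N M : ℕ) {f : ℕ → Ω → ℝ}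
    (hf : ∀ i, Measurable (f i)) : Measurable fun ω => topSum N M (f · ω) := by
  unfold topSum
  split_ifs with h
  · convert Finset.measurable_sup' h fun T _ => Finset.measurable_sum T fun i _ => hf i
    rw [Finset.sup'_apply]
  · exact measurable_const

lemma eventually_topSum_floor_mul_div_lt {y : ℕ → ℝ} {γ t c b : ℝ} (hγ : γ ∈ Set.Icc 0 1)
    (hexcess : Tendsto (fun N : ℕ => (∑ i ∈ range N, max (y i - t) 0) / N) atTop (𝓝 c))
    (hb : γ * t + c < b) : ∀ᶠ N : ℕ in atTop, topSum N ⌊γ * N⌋₊ y / N < b := by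
  have hbound : Tendsto (fun N : ℕ => (⌊γ * N⌋₊ : ℝ) / N * t
      + (∑ i ∈ range N, max (y i - t) 0) / N) atTop (𝓝 (γ * t + c)) :=
    (((tendsto_nat_floor_mul_div_atTop hγ.1).comp tendsto_natCast_atTop_atTop).mul_const
      t).add hexcess
  filter_upwards [hbound.eventually (eventually_lt_nhds hb)] with N hN
  refine lt_of_le_of_lt ?_ hN
  have hMN : ⌊γ * N⌋₊ ≤ N := Nat.floor_le_of_le (by nlinarith [hγ.2, N.cast_nonneg (α := ℝ)])
  calc topSum N ⌊γ * N⌋₊ y / N ≤ (⌊γ * N⌋₊ * t + ∑ i ∈ range N, max (y i - t) 0) / N := by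
        gcongr
        exact topSum_le_mul_add_sum_max_sub hMN t y
    _ = _ := by rw [add_div, mul_div_right_comm]

lemma eventually_lt_topSum_floor_mul_div {y : ℕ → ℝ} (hy : ∀ i, 0 ≤ y i) {γ t p c b : ℝ}
    (hγ : γ ≤ 1) (hp : p < γ) (hb : b < c)
    (hcount : Tendsto (fun N : ℕ => (#{i ∈ range N | t < y i} : ℝ) / N) atTop (𝓝 p))
    (hsum : Tendsto (fun N : ℕ => (∑ i ∈ range N with t < y i, y i) / N) atTop (𝓝 c)) :
    ∀ᶠ N : ℕ in atTop, b < topSum N ⌊γ * N⌋₊ y / N := by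
  filter_upwards [hcount.eventually (eventually_lt_nhds hp),
    hsum.eventually (eventually_gt_nhds hb), eventually_gt_atTop 0] with N hcountN hsumN hN
  have hN' : (0 : ℝ) < N := by exact_mod_cast hN
  have hMN : ⌊γ * N⌋₊ ≤ N := Nat.floor_le_of_le (by nlinarith)
  have hcard : #{i ∈ range N | t < y i} ≤ ⌊γ * N⌋₊ :=
    Nat.le_floor (by rw [div_lt_iff₀ hN'] at hcountN; exact hcountN.le)
  refine hsumN.trans_le ?_
  gcongr
  exact sum_le_topSum hMN hy (filter_subset _ _) hcard

lemma tendsto_topSum_floor_mul_div {y : ℕ → ℝ} (hy : ∀ i, 0 ≤ y i) {γ s L : ℝ}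
    (hγ : γ ∈ Set.Icc 0 1)
    (hexcess : Tendsto (fun N : ℕ => (∑ i ∈ range N, max (y i - s) 0) / N) atTop
      (𝓝 (L - γ * s)))
    {t p c : ℕ → ℝ} (hp : ∀ k, p k < γ) (hc : Tendsto c atTop (𝓝 L))
    (hcount : ∀ k, Tendsto (fun N : ℕ => (#{i ∈ range N | t k < y i} : ℝ) / N) atTop (𝓝 (p k)))
    (hsum : ∀ k, Tendsto (fun N : ℕ => (∑ i ∈ range N with t k < y i, y i) / N) atTop
      (𝓝 (c k))) :
    Tendsto (fun N : ℕ => topSum N ⌊γ * N⌋₊ y / N) atTop (𝓝 L) := by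
  refine tendsto_order.2 ⟨fun b hb => ?_, fun b hb =>
    eventually_topSum_floor_mul_div_lt hγ hexcess (by linarith)⟩
  obtain ⟨k, hk⟩ := (hc.eventually (eventually_gt_nhds hb)).exists
  exact eventually_lt_topSum_floor_mul_div hy hγ.2 (hp k) hk (hcount k) (hsum k)

lemma ae_tendsto_topSum_floor_mul_div_abs {Ω : Type*} [MeasurableSpace Ω] {μ : Measure Ω}
    {X : ℕ → Ω → ℝ} (hX : ∀ i, Measurable (X i))
    (hindep : Pairwise fun i j => IndepFun (X i) (X j) μ)
    (hdist : ∀ i, μ.map (X i) = gaussianReal 0 1) {γ a : ℝ} (ha0 : 0 ≤ a)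
    (ha : gaussQ a = γ / 2) :
    ∀ᵐ ω ∂μ, Tendsto (fun N : ℕ => topSum N ⌊γ * N⌋₊ (|X · ω|) / N) atTop
      (𝓝 (√(2 / π) * exp (-a ^ 2 / 2))) := by
  have hγ : γ ∈ Set.Icc 0 1 := ⟨by linarith [gaussQ_nonneg a], by linarith [gaussQ_le_half ha0]⟩
  -- A sequence of thresholds, so that the strong law holds for all of them off a single null set.
  set t : ℕ → ℝ := fun k => a + 1 / ((k : ℝ) + 1)
  have hat (k : ℕ) : a < t k := lt_add_of_pos_right a (by positivity)
  have ht : Tendsto t atTop (𝓝 a) := by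
    have := (tendsto_one_div_add_atTop_nhds_zero_nat (𝕜 := ℝ)).const_add a
    rwa [add_zero] at this
  have hp (k : ℕ) : 2 * gaussQ (t k) < γ := by linarith [gaussQ_strictAnti (hat k)]
  have hc : Tendsto (fun k => √(2 / π) * exp (-t k ^ 2 / 2)) atTop
      (𝓝 (√(2 / π) * exp (-a ^ 2 / 2))) :=
    (((ht.pow 2).neg.div_const 2).rexp).const_mul _
  have hexcess := ae_tendsto_sum_range_comp_div hX hindep hdist
    ((measurable_abs.sub_const a).max measurable_const) (integrable_gaussianReal_max_abs_sub a)
  have hcount : ∀ᵐ ω ∂μ, ∀ k, _ := ae_all_iff.2 fun k =>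
    ae_tendsto_sum_range_comp_div hX hindep hdist (g := fun x => (Set.Ioi (t k)).indicator 1 |x|)
      ((measurable_one.indicator measurableSet_Ioi).comp measurable_abs)
      (integrable_gaussianReal_indicator_Ioi_abs_one (t k))
  have hsum : ∀ᵐ ω ∂μ, ∀ k, _ := ae_all_iff.2 fun k =>
    ae_tendsto_sum_range_comp_div hX hindep hdist (g := fun x => (Set.Ioi (t k)).indicator id |x|)
      ((measurable_id.indicator measurableSet_Ioi).comp measurable_abs)
      (integrable_gaussianReal_indicator_Ioi_abs_id (t k))
  filter_upwards [hexcess, hcount, hsum] with ω hexcessω hcountω hsumω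
  refine tendsto_topSum_floor_mul_div (s := a) (t := t) (fun i => abs_nonneg _) hγ ?_ hp hc
    (fun k => ?_) (fun k => ?_)
  · rw [integral_gaussianReal_max_abs_sub ha0, ha] at hexcessω
    convert hexcessω using 2
    ring
  · rw [← integral_gaussianReal_indicator_Ioi_abs_one (ha0.trans (hat k).le)]
    convert hcountω k using 3
    simp [Set.indicator_apply, sum_boole]
  · rw [← integral_gaussianReal_indicator_Ioi_abs_id (ha0.trans (hat k).le)]
    convert hsumω k using 3
    simp [Set.indicator_apply, sum_filter]

lemma tendsto_measure_abs_sub_gt_of_ae_tendsto {Ω : Type*} [MeasurableSpace Ω] {μ : Measure Ω}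
    [IsFiniteMeasure μ] {f : ℕ → Ω → ℝ} {c : ℝ} (hf : ∀ n, AEStronglyMeasurable (f n) μ)
    (hlim : ∀ᵐ ω ∂μ, Tendsto (fun n => f n ω) atTop (𝓝 c)) {ε : ℝ} (hε : 0 < ε) :
    Tendsto (fun n => μ {ω | |f n ω - c| > ε}) atTop (𝓝 0) := by
  refine tendsto_of_tendsto_of_tendsto_of_le_of_le tendsto_const_nhds
    (tendstoInMeasure_iff_dist.1 (tendstoInMeasure_of_tendsto_ae hf hlim) ε hε)
    (fun n => zero_le) (fun n => measure_mono fun ω (hω : |f n ω - c| > ε) => ?_)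
  simpa [Real.dist_eq] using hω.le

/-- Concentration of the partial sums of order statistics of i.i.d. standard Gaussians:
with `M = ⌊γN⌋`, `S_N/N → √(2/π)` and `S_M/S_N → exp(−Ψ(γ/2)²/2)` in probability. -/
theorem stmt5 {Ω : Type*} [MeasurableSpace Ω] (μ : Measure Ω) [IsProbabilityMeasure μ]
    (X : ℕ → Ω → ℝ) (hmeas : ∀ i, Measurable (X i))
    (hindep : iIndepFun X μ)
    (hdist : ∀ i, Measure.map (X i) μ = gaussianReal 0 1)
    (γ : ℝ) (hγ : γ ∈ Set.Ioo (0 : ℝ) 1)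
    (a : ℝ) (ha : gaussQ a = γ / 2) :
    ∃ ε₀ > 0, ∀ ε : ℝ, 0 < ε → ε < ε₀ →
      (Tendsto
          (fun N => μ {ω | |(∑ i ∈ Finset.range N, |X i ω|) / N - Real.sqrt (2 / Real.pi)| > ε})
          atTop (nhds 0)
        ∧ Tendsto
          (fun N => μ {ω | |topSum N ⌊γ * N⌋₊ (fun i => |X i ω|) /
              (∑ i ∈ Finset.range N, |X i ω|) - Real.exp (-(a ^ 2) / 2)| > ε})
          atTop (nhds 0)) := by
  have ha0 : 0 < a := (gaussQ_strictAnti.lt_iff_gt).1 (by rw [ha, gaussQ_zero]; linarith [hγ.2])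
  have hpair : Pairwise fun i j => IndepFun (X i) (X j) μ := fun i j hij => hindep.indepFun hij
  have hmeas_sum : ∀ N, Measurable fun ω => ∑ i ∈ range N, |X i ω| := fun N =>
    Finset.measurable_sum _ fun i _ => (hmeas i).abs
  have hmean : ∀ᵐ ω ∂μ, Tendsto (fun N : ℕ => (∑ i ∈ range N, |X i ω|) / N) atTop
      (𝓝 (√(2 / π))) := by
    simpa only [integral_gaussianReal_abs] using
      ae_tendsto_sum_range_comp_div hmeas hpair hdist measurable_abs integrable_gaussianReal_abs
  have hratio : ∀ᵐ ω ∂μ, Tendsto (fun N : ℕ => topSum N ⌊γ * N⌋₊ (|X · ω|) /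
      ∑ i ∈ range N, |X i ω|) atTop (𝓝 (exp (-a ^ 2 / 2))) := by
    filter_upwards [hmean, ae_tendsto_topSum_floor_mul_div_abs hmeas hpair hdist ha0.le ha]
      with ω hmeanω htopω
    have hlim := htopω.div hmeanω (by positivity)
    rw [mul_div_cancel_left₀ _ (by positivity)] at hlim
    refine hlim.congr' ((eventually_ne_atTop 0).mono fun N hN => ?_)
    exact div_div_div_cancel_right₀ (by exact_mod_cast hN) _ _
  refine ⟨1, one_pos, fun ε hε _ => ⟨?_, ?_⟩⟩
  · exact tendsto_measure_abs_sub_gt_of_ae_tendsto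
      (fun N => ((hmeas_sum N).div_const _).aestronglyMeasurable) hmean hε
  · exact tendsto_measure_abs_sub_gt_of_ae_tendsto
      (fun N => ((measurable_topSum N _ fun i => (hmeas i).abs).div (hmeas_sum N)).aestronglyMeasurable)
      hratio hε
end

section
/- Let r be a nonnegative integer, c₁, c₂ > 0, x₀ > 0, and let f : ℝ → ℝ be a nonnegative measurable function with ∫_0^∞ f(x) dx = 1/2 and c₁·x^r ≤ f(x) ≤ c₂·x^r for all x ∈ (0, x₀]. Then there exist C > 0 and t₀ > 0 such that for every t ∈ (0, t₀] and every a ≥ 0 with ∫_a^∞ f(x) dx = 1/2 − t, one has ∫_0^a x f(x) dx ≤ C · t^{(r+2)/(r+1)}. -/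
/-!
Let `t = ∫_{(0,a]} f`. Since `f ≥ c₁ x^r` near the origin, `t ≥ c₁ a^{r+1}/(r+1)` once `t` is
small (small mass forces `a ≤ x₀`), so `a = O(t^{1/(r+1)})`. On the other hand
`∫_{(0,a]} x f(x) dx ≤ a t`, which is `O(t^{(r+2)/(r+1)})`.
-/

open MeasureTheory Set

theorem setIntegral_Ioc_mul_le {f : ℝ → ℝ} {a : ℝ} (hf : IntegrableOn f (Ioc 0 a))
    (hf0 : ∀ x ∈ Ioc 0 a, 0 ≤ f x) :
    ∫ x in Ioc 0 a, x * f x ≤ a * ∫ x in Ioc 0 a, f x := by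
  have hle : ∀ x ∈ Ioc 0 a, x * f x ≤ a * f x := fun x hx =>
    mul_le_mul_of_nonneg_right hx.2 (hf0 x hx)
  rw [← integral_const_mul]
  refine setIntegral_mono_on ?_ (hf.const_mul a) measurableSet_Ioc hle
  refine (hf.const_mul a).mono' (measurable_id.aestronglyMeasurable.mul hf.aestronglyMeasurable) ?_
  filter_upwards [ae_restrict_mem measurableSet_Ioc] with x hx
  rw [Real.norm_of_nonneg (mul_nonneg hx.1.le (hf0 x hx))]
  exact hle x hx

theorem mul_pow_succ_div_le_setIntegral_Ioc {f : ℝ → ℝ} {c b : ℝ} {r : ℕ} (hb : 0 ≤ b)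
    (hf : IntegrableOn f (Ioc 0 b)) (hlow : ∀ x ∈ Ioc 0 b, c * x ^ r ≤ f x) :
    c * b ^ (r + 1) / (r + 1) ≤ ∫ x in Ioc 0 b, f x := by
  have hpow : ∫ x in Ioc 0 b, c * x ^ r = c * b ^ (r + 1) / (r + 1) := by
    rw [← intervalIntegral.integral_of_le hb, intervalIntegral.integral_const_mul, integral_pow]
    ring
  rw [← hpow]
  exact setIntegral_mono_on (by fun_prop : Continuous fun x : ℝ => c * x ^ r).integrableOn_Ioc
    hf measurableSet_Ioc hlow

theorem mul_pow_succ_div_le_setIntegral_Ioc_of_lt {f : ℝ → ℝ} {c x₀ a : ℝ} {r : ℕ}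
    (hx₀ : 0 ≤ x₀) (ha : 0 ≤ a) (hf : IntegrableOn f (Ioc 0 a)) (hf0 : ∀ x ∈ Ioc 0 a, 0 ≤ f x)
    (hlow : ∀ x ∈ Ioc 0 x₀, c * x ^ r ≤ f x)
    (hsmall : ∫ x in Ioc 0 a, f x < c * x₀ ^ (r + 1) / (r + 1)) :
    c * a ^ (r + 1) / (r + 1) ≤ ∫ x in Ioc 0 a, f x := by
  have hax : a ≤ x₀ := by
    by_contra! h
    have hsub : Ioc 0 x₀ ⊆ Ioc 0 a := Ioc_subset_Ioc_right h.le
    have hmono : ∫ x in Ioc 0 x₀, f x ≤ ∫ x in Ioc 0 a, f x :=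
      setIntegral_mono_set hf (ae_restrict_of_forall_mem measurableSet_Ioc hf0)
        (Filter.Eventually.of_forall hsub)
    have hx₀_low := mul_pow_succ_div_le_setIntegral_Ioc hx₀ (hf.mono_set hsub) hlow
    linarith
  exact mul_pow_succ_div_le_setIntegral_Ioc ha hf fun x hx => hlow x ⟨hx.1, hx.2.trans hax⟩

theorem mul_le_rpow_of_mul_pow_succ_div_le {c a t : ℝ} {r : ℕ} (hc : 0 < c) (ha : 0 ≤ a)
    (ht : 0 ≤ t) (h : c * a ^ (r + 1) / (r + 1) ≤ t) :
    a * t ≤ ((r + 1) / c) ^ ((r + 1 : ℝ)⁻¹) * t ^ (((r : ℝ) + 2) / ((r : ℝ) + 1)) := by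
  have hr : (0 : ℝ) < r + 1 := by positivity
  have ha' : a ≤ ((r + 1) / c * t) ^ ((r + 1 : ℝ)⁻¹) := by
    rw [Real.le_rpow_inv_iff_of_pos ha (by positivity) hr,
      show ((r : ℝ) + 1) = ((r + 1 : ℕ) : ℝ) by push_cast; ring, Real.rpow_natCast]
    rw [div_le_iff₀ hr] at h
    rw [div_mul_eq_mul_div, le_div_iff₀ hc]
    push_cast
    linarith
  have hexp : ((r : ℝ) + 2) / ((r : ℝ) + 1) = (r + 1 : ℝ)⁻¹ + 1 := by
    field_simp
    ring
  calc a * t ≤ ((r + 1) / c * t) ^ ((r + 1 : ℝ)⁻¹) * t := mul_le_mul_of_nonneg_right ha' ht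
    _ = _ := by
      rw [Real.mul_rpow (by positivity) ht, mul_assoc, hexp,
        Real.rpow_add_one' ht (by positivity)]

theorem stmt14_general (r : ℕ) (c₁ x₀ : ℝ) (hc₁ : 0 < c₁) (hx₀ : 0 < x₀)
    (f : ℝ → ℝ) (hnonneg : ∀ x, 0 ≤ f x)
    (hhalf : (∫ x in Set.Ioi (0 : ℝ), f x) = 1 / 2)
    (hlow : ∀ x ∈ Set.Ioc (0 : ℝ) x₀, c₁ * x ^ r ≤ f x) :
    ∃ C > 0, ∃ t₀ > 0, ∀ t ∈ Set.Ioc (0 : ℝ) t₀, ∀ a : ℝ, 0 ≤ a →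
      (∫ x in Set.Ioi a, f x) = 1 / 2 - t →
      (∫ x in Set.Ioc (0 : ℝ) a, x * f x) ≤ C * t ^ (((r : ℝ) + 2) / ((r : ℝ) + 1)) := by
  have hint : IntegrableOn f (Ioi 0) := Integrable.of_integral_ne_zero (by rw [hhalf]; norm_num)
  have hmass₀ : 0 < c₁ * x₀ ^ (r + 1) / (r + 1) := by positivity
  refine ⟨((r + 1) / c₁) ^ ((r + 1 : ℝ)⁻¹), by positivity, c₁ * x₀ ^ (r + 1) / (r + 1) / 2,
    by positivity, ?_⟩
  rintro t ⟨ht0, ht⟩ a ha hQ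
  have hfa : IntegrableOn f (Ioc 0 a) := hint.mono_set Ioc_subset_Ioi_self
  have hmass : ∫ x in Ioc 0 a, f x = t := by
    rw [← intervalIntegral.integral_of_le ha, ← intervalIntegral.integral_Ioi_sub_Ioi hint ha,
      hhalf, hQ]
    ring
  have hpow : c₁ * a ^ (r + 1) / (r + 1) ≤ t := hmass ▸
    mul_pow_succ_div_le_setIntegral_Ioc_of_lt hx₀.le ha hfa (fun x _ => hnonneg x) hlow
      (by linarith)
  calc ∫ x in Ioc 0 a, x * f x ≤ a * t := hmass ▸ setIntegral_Ioc_mul_le hfa fun x _ => hnonneg x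
    _ ≤ _ := mul_le_rpow_of_mul_pow_succ_div_le hc₁ ha ht0.le hpow

/-- If `c₁ x^r ≤ f(x) ≤ c₂ x^r` near the origin and `∫₀^∞ f = 1/2`, then for all sufficiently
small `t > 0` and any `a ≥ 0` with `∫_a^∞ f = 1/2 − t`, one has
`∫₀^a x f(x) dx ≤ C t^{(r+2)/(r+1)}` for some constant `C > 0`. -/
theorem stmt14 (r : ℕ) (c₁ c₂ x₀ : ℝ) (hc₁ : 0 < c₁) (hc₂ : 0 < c₂) (hx₀ : 0 < x₀)
    (f : ℝ → ℝ) (hmeas : Measurable f) (hnonneg : ∀ x, 0 ≤ f x)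
    (hhalf : (∫ x in Set.Ioi (0 : ℝ), f x) = 1 / 2)
    (hlow : ∀ x ∈ Set.Ioc (0 : ℝ) x₀, c₁ * x ^ r ≤ f x)
    (hupp : ∀ x ∈ Set.Ioc (0 : ℝ) x₀, f x ≤ c₂ * x ^ r) :
    ∃ C > 0, ∃ t₀ > 0, ∀ t ∈ Set.Ioc (0 : ℝ) t₀, ∀ a : ℝ, 0 ≤ a →
      (∫ x in Set.Ioi a, f x) = 1 / 2 - t →
      (∫ x in Set.Ioc (0 : ℝ) a, x * f x) ≤ C * t ^ (((r : ℝ) + 2) / ((r : ℝ) + 1)) :=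
  stmt14_general r c₁ x₀ hc₁ hx₀ f hnonneg hhalf hlow
end
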